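/- arXiv:2603.24526 — 2 statements merged into one kernel-verified Lean document; each statement's English description precedes it below -/
import Mathlib

section
/- Consider a two-sided matching market with men M and women W, each man having a strict ranking r_m of W and each woman a strict ranking r_w of M. Suppose the maximal displacement of the men's rankings of women is at most Δ_M and the maximal displacement of the women's rankings of men is at most Δ_W. Then for every stable matching μ and every matched pair (m, w) ∈ μ, |r_m(w) − r_w(m)| ≤ 2·max{Δ_W, Δ_M}. -/
open Finset

lemma key_aux {A B : Type*} [Fintype A] [Fintype B]
    (rA : A → B ≃ Fin (Fintype.card B)) (rB : B → A ≃ Fin (Fintype.card A))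
    (ΔB : ℕ)
    (hB : ∀ (a : A) (b b' : B), (((rB b a : ℕ) : ℤ) - ((rB b' a : ℕ) : ℤ)).natAbs ≤ ΔB)
    (μ : A → Option B) (ν : B → Option A)
    (hμν : ∀ a b, μ a = some b ↔ ν b = some a)
    (hns : ∀ a b, (∀ b', μ a = some b' → (rA a b : ℕ) < (rA a b' : ℕ)) →
      ∃ a', ν b = some a' ∧ (rB b a' : ℕ) ≤ (rB b a : ℕ))
    (a : A) (b : B) (hab : μ a = some b) :
    (rA a b : ℕ) ≤ (rB b a : ℕ) + 2 * ΔB := by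
  by_contra hcon
  push_neg at hcon
  set k := (rA a b : ℕ) with hk
  set l := (rB b a : ℕ) with hl
  set S : Finset B := univ.filter (fun b' => (rA a b' : ℕ) < k) with hS
  set T : Finset A := univ.filter (fun a' => (rB b a' : ℕ) < l + 2 * ΔB) with hT
  have hmain : ∀ b' ∈ S, ∃ a', ν b' = some a' ∧ a' ∈ T := by
    intro b' hb'
    simp only [hS, mem_filter, mem_univ, true_and] at hb'
    obtain ⟨a', ha', hle⟩ := hns a b' (by
      intro b'' hb''
      rw [hab] at hb''
      cases hb''
      exact hb')
    refine ⟨a', ha', ?_⟩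
    have hane : a' ≠ a := by
      rintro rfl
      rw [← hμν] at ha'
      rw [hab] at ha'
      cases ha'
      omega
    have h1 : (rB b' a' : ℕ) < (rB b' a : ℕ) := by
      rcases lt_or_eq_of_le hle with h | h
      · exact h
      · exact absurd ((rB b').injective (Fin.ext h)) hane
    have h2 := hB a b' b
    have h3 := hB a' b b'
    simp only [hT, mem_filter, mem_univ, true_and]
    omega
  have hST : S.card ≤ T.card := by
    apply Finset.card_le_card_of_injOn (fun b' => (ν b').getD a)
    · intro b' hb'
      obtain ⟨a', ha', haT⟩ := hmain b' hb'
      simpa [ha'] using haT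
    · intro b1 h1 b2 h2 heq
      obtain ⟨a1, ha1, _⟩ := hmain b1 h1
      obtain ⟨a2, ha2, _⟩ := hmain b2 h2
      simp only [ha1, ha2, Option.getD_some] at heq
      subst heq
      have e1 : μ a1 = some b1 := (hμν a1 b1).mpr ha1
      have e2 : μ a1 = some b2 := (hμν a1 b2).mpr ha2
      rw [e1] at e2
      exact (Option.some_injective _ e2)
  have hTcard : T.card ≤ l + 2 * ΔB := by
    calc T.card ≤ (Finset.range (l + 2 * ΔB)).card := by
          apply Finset.card_le_card_of_injOn (fun a' => (rB b a' : ℕ))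
          · intro a' ha'
            simp only [hT, mem_filter, mem_univ, true_and] at ha'
            simpa using ha'
          · intro x _ y _ h
            exact (rB b).injective (Fin.ext h)
      _ = l + 2 * ΔB := Finset.card_range _
  have hpos : 0 < Fintype.card B := lt_of_le_of_lt (Nat.zero_le _) (rA a b).isLt
  have hkn : k < Fintype.card B := (rA a b).isLt
  have hScard : k ≤ S.card := by
    have h := Finset.card_le_card_of_injOn
      (f := fun j : ℕ => (rA a).symm ⟨j % Fintype.card B, Nat.mod_lt _ hpos⟩)
      (s := Finset.range k) (t := S) ?_ ?_
    · simpa using h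
    · intro j hj
      simp only [Finset.mem_coe, Finset.mem_range] at hj
      have hjn : j < Fintype.card B := lt_trans hj hkn
      simp only [Finset.mem_coe, hS, mem_filter, mem_univ, true_and, Equiv.apply_symm_apply, Fin.val_mk]
      rw [Nat.mod_eq_of_lt hjn]
      exact hj
    · intro x hx y hy h
      simp only [Finset.mem_coe, Finset.mem_range] at hx hy
      have hv := (rA a).symm.injective h
      rw [Fin.mk.injEq] at hv
      rwa [Nat.mod_eq_of_lt (lt_trans hx hkn), Nat.mod_eq_of_lt (lt_trans hy hkn)] at hv
  omega


/-- Holzman–Samet: in a market where all men's rankings of women are within maximal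
displacement `ΔM` and all women's rankings of men within `ΔW`, any stably matched pair
`(m, w)` has mutual rank gap at most `2 * max ΔW ΔM`.  Rankings are bijections to
`Fin (card)`, smaller position = better. -/
theorem stmt_8 {M W : Type*} [Fintype M] [Fintype W]
    (rM : M → W ≃ Fin (Fintype.card W)) (rW : W → M ≃ Fin (Fintype.card M))
    (ΔM ΔW : ℕ)
    (hM : ∀ (w : W) (m m' : M), (((rM m w : ℕ) : ℤ) - ((rM m' w : ℕ) : ℤ)).natAbs ≤ ΔM)
    (hW : ∀ (m : M) (w w' : W), (((rW w m : ℕ) : ℤ) - ((rW w' m : ℕ) : ℤ)).natAbs ≤ ΔW)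
    (μ : M → Option W) (ν : W → Option M)
    (hμν : ∀ m w, μ m = some w ↔ ν w = some m)
    (hstable : ¬ ∃ (m : M) (w : W),
      (∀ w', μ m = some w' → (rM m w : ℕ) < (rM m w' : ℕ)) ∧
      (∀ m', ν w = some m' → (rW w m : ℕ) < (rW w m' : ℕ)))
    (m : M) (w : W) (hmw : μ m = some w) :
    (((rM m w : ℕ) : ℤ) - ((rW w m : ℕ) : ℤ)).natAbs ≤ 2 * max ΔW ΔM := by
  have hns1 : ∀ m w, (∀ w', μ m = some w' → (rM m w : ℕ) < (rM m w' : ℕ)) →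
      ∃ m', ν w = some m' ∧ (rW w m' : ℕ) ≤ (rW w m : ℕ) := by
    intro m' w' hA
    by_contra hB
    push_neg at hB
    exact hstable ⟨m', w', hA, fun m'' h => hB m'' h⟩
  have hns2 : ∀ w m, (∀ m', ν w = some m' → (rW w m : ℕ) < (rW w m' : ℕ)) →
      ∃ w', μ m = some w' ∧ (rM m w' : ℕ) ≤ (rM m w : ℕ) := by
    intro w' m' hA
    by_contra hB
    push_neg at hB
    exact hstable ⟨m', w', fun w'' h => hB w'' h, hA⟩
  have h1 : (rM m w : ℕ) ≤ (rW w m : ℕ) + 2 * ΔW :=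
    key_aux rM rW ΔW hW μ ν hμν hns1 m w hmw
  have h2 : (rW w m : ℕ) ≤ (rM m w : ℕ) + 2 * ΔM :=
    key_aux rW rM ΔM hM ν μ (fun w' m' => (hμν m' w').symm) hns2 w m ((hμν m w).mp hmw)
  omega
end

section
/- In a balanced market with n men and n women, suppose every man m ranks every woman w within c₁·log n of her central-order rank, and every woman ranks every man within c₂·log n of his central-order rank (i.e., |r_m(w) − r(w)| ≤ c₁ log n and |r_w(m) − r(m)| ≤ c₂ log n for all m, w). Then for every stable matching μ and every matched pair (m,w) ∈ μ, |r(m) − r(w)| ≤ (c₁ + c₂)·log n + 2·max{2c₁, 2c₂}·log n. -/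
/-!
Let `b` bound how far any woman's ranking of the men strays from their central order. If `m`
ranks his partner `μ m` in position `k`, each of the `k` women he prefers is, by stability,
matched to a man she prefers to `m`, whose central rank is therefore at most `r(m) + 2b`. These
`k` men and `m` itself are `k + 1` distinct men, so one of them has central rank at least `k`,
and `k ≤ r(m) + 2b`. Combined with `|r_m(w) - r(w)| ≤ c₁ log n` this bounds `r(w) - r(m)`, and the
same argument with the sexes swapped bounds `r(m) - r(w)`.
-/

open Finset

theorem Finset.exists_card_le_succ_of_injective {α : Type*} {f : α → ℕ}
    (hf : Function.Injective f) {s : Finset α} (hs : s.Nonempty) :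
    ∃ x ∈ s, #s ≤ f x + 1 := by
  by_contra! h
  have hsub : s.image f ⊆ range (#s - 1) := by
    intro j hj
    obtain ⟨x, hx, rfl⟩ := mem_image.mp hj
    exact mem_range.mpr (by have := h x hx; omega)
  have := card_le_card hsub
  rw [card_image_of_injective s hf, card_range] at this
  have := hs.card_pos
  omega

namespace StableMatching

variable {M W : Type*} [Fintype M] [Fintype W]

/-- Ranks are positions in a preference list: a smaller rank is a more preferred partner. -/
def IsStable (rM : M → W ≃ Fin (Fintype.card W)) (rW : W → M ≃ Fin (Fintype.card M))
    (μ : M ≃ W) : Prop :=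
  ¬ ∃ (m : M) (w : W), rM m w < rM m (μ m) ∧ rW w m < rW w (μ.symm w)

variable {rM : M → W ≃ Fin (Fintype.card W)} {rW : W → M ≃ Fin (Fintype.card M)} {μ : M ≃ W}

theorem IsStable.symm (hμ : IsStable rM rW μ) : IsStable rW rM μ.symm := by
  rintro ⟨w, m, hw, hm⟩
  exact hμ ⟨m, w, by simpa using hm, hw⟩

theorem IsStable.partner_le_of_lt (hμ : IsStable rM rW μ) {m : M} {w : W}
    (h : rM m w < rM m (μ m)) : rW w (μ.symm w) ≤ rW w m :=
  not_lt.mp fun h' => hμ ⟨m, w, h, h'⟩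

variable {rcM : M ≃ Fin (Fintype.card M)} {b : ℝ}

theorem IsStable.central_rank_partner_le (hμ : IsStable rM rW μ)
    (hb : ∀ w m, |((rW w m : ℕ) : ℝ) - ((rcM m : ℕ) : ℝ)| ≤ b) {m : M} {w : W}
    (h : rM m w < rM m (μ m)) :
    ((rcM (μ.symm w) : ℕ) : ℝ) ≤ ((rcM m : ℕ) : ℝ) + 2 * b := by
  have hpref : ((rW w (μ.symm w) : ℕ) : ℝ) ≤ ((rW w m : ℕ) : ℝ) := by
    exact_mod_cast hμ.partner_le_of_lt h
  have h₁ := (abs_sub_le_iff.mp (hb w (μ.symm w))).2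
  have h₂ := (abs_sub_le_iff.mp (hb w m)).1
  linarith

theorem IsStable.rank_partner_le (hμ : IsStable rM rW μ)
    (hb : ∀ w m, |((rW w m : ℕ) : ℝ) - ((rcM m : ℕ) : ℝ)| ≤ b) (m : M) :
    ((rM m (μ m) : ℕ) : ℝ) ≤ ((rcM m : ℕ) : ℝ) + 2 * b := by
  classical
  set preferred : Finset W := (Iio (rM m (μ m))).map (rM m).symm.toEmbedding
  have hm : m ∉ preferred.map μ.symm.toEmbedding := by
    simp [preferred, mem_map_equiv]
  set T := insert m (preferred.map μ.symm.toEmbedding)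
  have hT : #T = (rM m (μ m) : ℕ) + 1 := by
    simp only [T, preferred, card_insert_of_notMem hm, card_map, Fin.card_Iio]
  have hT_le : ∀ x ∈ T, ((rcM x : ℕ) : ℝ) ≤ ((rcM m : ℕ) : ℝ) + 2 * b := by
    have hb₀ : 0 ≤ b := (abs_nonneg _).trans (hb (μ m) m)
    intro x hx
    rcases mem_insert.mp hx with rfl | hx
    · linarith
    · obtain ⟨w, hw, rfl⟩ := mem_map.mp hx
      rw [mem_map_equiv, Equiv.symm_symm, mem_Iio] at hw
      exact hμ.central_rank_partner_le hb hw
  obtain ⟨x, hx, hcard⟩ := exists_card_le_succ_of_injective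
    (Fin.val_injective.comp rcM.injective) (insert_nonempty m _)
  have : ((rM m (μ m) : ℕ) : ℝ) ≤ ((rcM x : ℕ) : ℝ) := by
    rw [hT] at hcard
    exact_mod_cast Nat.le_of_succ_le_succ hcard
  linarith [hT_le x hx]

end StableMatching

theorem stmt_9_general {M W : Type*} [Fintype M] [Fintype W] (n : ℕ)
    (rcM : M ≃ Fin (Fintype.card M)) (rcW : W ≃ Fin (Fintype.card W))
    (rM : M → W ≃ Fin (Fintype.card W)) (rW : W → M ≃ Fin (Fintype.card M))
    (c₁ c₂ : ℝ)
    (h₁ : ∀ (m : M) (w : W), |((rM m w : ℕ) : ℝ) - ((rcW w : ℕ) : ℝ)| ≤ c₁ * Real.log n)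
    (h₂ : ∀ (w : W) (m : M), |((rW w m : ℕ) : ℝ) - ((rcM m : ℕ) : ℝ)| ≤ c₂ * Real.log n)
    (μ : M ≃ W)
    (hstable : ¬ ∃ (m : M) (w : W),
      (rM m w : ℕ) < (rM m (μ m) : ℕ) ∧ (rW w m : ℕ) < (rW w (μ.symm w) : ℕ))
    (m : M) (w : W) (hmw : μ m = w) :
    |((rcM m : ℕ) : ℝ) - ((rcW w : ℕ) : ℝ)| ≤
      (c₁ + c₂) * Real.log n + 2 * max (2 * c₁) (2 * c₂) * Real.log n := by
  have hμ : StableMatching.IsStable rM rW μ := hstable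
  subst hmw
  have hm := hμ.rank_partner_le h₂ m
  have hw := hμ.symm.rank_partner_le h₁ (μ m)
  rw [Equiv.symm_apply_apply] at hw
  have hL := Real.log_natCast_nonneg n
  have hmax₁ := mul_le_mul_of_nonneg_right (le_max_left (2 * c₁) (2 * c₂)) hL
  have hmax₂ := mul_le_mul_of_nonneg_right (le_max_right (2 * c₁) (2 * c₂)) hL
  have hc₁ := (abs_nonneg _).trans (h₁ m (μ m))
  have hc₂ := (abs_nonneg _).trans (h₂ (μ m) m)
  have e₁ := abs_sub_le_iff.mp (h₁ m (μ m))
  have e₂ := abs_sub_le_iff.mp (h₂ (μ m) m)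
  rw [abs_sub_le_iff]
  constructor <;> linarith

/-- In a balanced market of size `n`, if every man ranks every woman within `c₁ * log n`
of her central-order rank and every woman ranks every man within `c₂ * log n` of his
central-order rank, then in every stable matching the central ranks of matched partners
differ by at most `(c₁ + c₂) * log n + 2 * max (2*c₁) (2*c₂) * log n`. -/
theorem stmt_9 {M W : Type*} [Fintype M] [Fintype W] (n : ℕ)
    (hM : Fintype.card M = n) (hW : Fintype.card W = n)
    (rcM : M ≃ Fin (Fintype.card M)) (rcW : W ≃ Fin (Fintype.card W))
    (rM : M → W ≃ Fin (Fintype.card W)) (rW : W → M ≃ Fin (Fintype.card M))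
    (c₁ c₂ : ℝ)
    (h₁ : ∀ (m : M) (w : W), |((rM m w : ℕ) : ℝ) - ((rcW w : ℕ) : ℝ)| ≤ c₁ * Real.log n)
    (h₂ : ∀ (w : W) (m : M), |((rW w m : ℕ) : ℝ) - ((rcM m : ℕ) : ℝ)| ≤ c₂ * Real.log n)
    (μ : M ≃ W)
    (hstable : ¬ ∃ (m : M) (w : W),
      (rM m w : ℕ) < (rM m (μ m) : ℕ) ∧ (rW w m : ℕ) < (rW w (μ.symm w) : ℕ))
    (m : M) (w : W) (hmw : μ m = w) :
    |((rcM m : ℕ) : ℝ) - ((rcW w : ℕ) : ℝ)| ≤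
      (c₁ + c₂) * Real.log n + 2 * max (2 * c₁) (2 * c₂) * Real.log n :=
  stmt_9_general n rcM rcW rM rW c₁ c₂ h₁ h₂ μ hstable m w hmw
end
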